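/- Let d ≥ 2, K ⊂ ℝ^d compact contained in B_ρ(0), and let A(x) = (a_{ij}(x)) be a symmetric measurable matrix field and φ ∈ L¹_loc(ℝ^d) with φ > 0 a.e. Suppose ‖A(x)‖ φ(x) ≤ Φ(|x|) for all x outside K, where ‖A(x)‖ is the Frobenius norm and Φ is measurable with s^{1-d}/Φ(s) locally integrable on (ρ, ∞). Define a_n = ∫_{B_n(0)\B_ρ(0)} |y|^{2-2d}/Φ(|y|) dy and u_n(x) = ψ_n(|x|) where ψ_n(r) = 1 for r ≤ ρ, ψ_n(r) = 1 - (d·vol_d(B_1(0))/a_n)∫_ρ^r s^{1-d}/Φ(s) ds for ρ ≤ r ≤ n, and 0 otherwise. Then ∑_{i,j} ∫_{ℝ^d} a_{ij}(x) ∂_i u_n(x) ∂_j u_n(x) φ(x) dx ≤ d²·vol_d(B_1(0))²/a_n. -/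

import Mathlib

/-!
Pointwise, Cauchy–Schwarz and `‖A‖ φ ≤ Φ(|x|)` bound the integrand by `C² |x|^(2-2d) / Φ(|x|)`
on the annulus `ρ ≤ |x| ≤ n`, where `C = d V / a_n`, and by `0` elsewhere (`K` lies in the
inner ball, where the gradient vanishes). Integrating this majorant gives exactly
`C² a_n = d² V² / a_n`.
-/

open MeasureTheory Set

section QuadraticForm

variable {ι : Type*} [Fintype ι] (M : Matrix ι ι ℝ) (v : EuclideanSpace ℝ ι)

theorem sum_sum_mul_mul_le_sqrt_mul_norm_sq :
    ∑ i, ∑ j, M i j * v i * v j ≤ √(∑ i, ∑ j, M i j ^ 2) * ‖v‖ ^ 2 := by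
  have hv : ∑ p : ι × ι, (v p.1 * v p.2) ^ 2 = (‖v‖ ^ 2) ^ 2 := by
    rw [EuclideanSpace.real_norm_sq_eq, sq (∑ i, _), Finset.sum_mul_sum, Fintype.sum_prod_type]
    simp only [mul_pow]
  have := Real.sum_mul_le_sqrt_mul_sqrt Finset.univ (fun p : ι × ι => M p.1 p.2)
    (fun p => v p.1 * v p.2)
  simp only [hv, Real.sqrt_sq (sq_nonneg ‖v‖), Fintype.sum_prod_type] at this
  simpa only [mul_assoc] using this

theorem abs_mul_mul_le_sqrt_mul_norm_sq (i j : ι) :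
    |M i j * v i * v j| ≤ √(∑ i, ∑ j, M i j ^ 2) * ‖v‖ ^ 2 := by
  have hM : M i j ^ 2 ≤ ∑ i, ∑ j, M i j ^ 2 := by
    rw [← Fintype.sum_prod_type (f := fun p => M p.1 p.2 ^ 2)]
    exact Finset.single_le_sum (f := fun p : ι × ι => M p.1 p.2 ^ 2)
      (fun _ _ => sq_nonneg _) (Finset.mem_univ (i, j))
  rw [abs_mul, abs_mul, sq, ← mul_assoc]
  gcongr
  · exact Real.abs_le_sqrt hM
  · exact Real.norm_eq_abs _ ▸ PiLp.norm_apply_le v i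
  · exact Real.norm_eq_abs _ ▸ PiLp.norm_apply_le v j

end QuadraticForm

theorem sum_sum_integral_mul_le_integral_of_ae_le {α ι : Type*} [MeasurableSpace α] {μ : Measure α}
    [Fintype ι] {A : α → Matrix ι ι ℝ} {v : α → EuclideanSpace ℝ ι} {φ g : α → ℝ}
    (hA : ∀ i j, AEStronglyMeasurable (fun x => A x i j) μ) (hv : AEStronglyMeasurable v μ)
    (hφ : AEStronglyMeasurable φ μ) (hg : Integrable g μ) (hφ0 : ∀ᵐ x ∂μ, 0 ≤ φ x)
    (hle : ∀ᵐ x ∂μ, ‖v x‖ ^ 2 * (√(∑ i, ∑ j, A x i j ^ 2) * φ x) ≤ g x) :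
    ∑ i, ∑ j, ∫ x, A x i j * v x i * v x j * φ x ∂μ ≤ ∫ x, g x ∂μ := by
  have hint : ∀ i j, Integrable (fun x => A x i j * v x i * v x j * φ x) μ := by
    intro i j
    refine hg.mono' (by fun_prop) ?_
    filter_upwards [hφ0, hle] with x hφx hx
    rw [Real.norm_eq_abs, abs_mul, abs_of_nonneg hφx]
    exact ((mul_le_mul_of_nonneg_right (abs_mul_mul_le_sqrt_mul_norm_sq _ _ i j) hφx).trans_eq
      (by ring)).trans hx
  calc ∑ i, ∑ j, ∫ x, A x i j * v x i * v x j * φ x ∂μ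
      = ∫ x, ∑ i, ∑ j, A x i j * v x i * v x j * φ x ∂μ := by
        rw [integral_finsetSum _ fun i _ => integrable_finsetSum _ fun j _ => hint i j]
        exact Finset.sum_congr rfl fun i _ => (integral_finsetSum _ fun j _ => hint i j).symm
    _ ≤ ∫ x, g x ∂μ := by
        refine integral_mono_ae (integrable_finsetSum _ fun i _ =>
          integrable_finsetSum _ fun j _ => hint i j) hg ?_
        filter_upwards [hφ0, hle] with x hφx hx
        simp only [← Finset.sum_mul]
        exact ((mul_le_mul_of_nonneg_right (sum_sum_mul_mul_le_sqrt_mul_norm_sq _ _) hφx).trans_eq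
          (by ring)).trans hx

theorem sq_div_mul_le_sq_div {t Φ m : ℝ} (hm : 0 ≤ m) (hmΦ : m ≤ Φ) :
    (t / Φ) ^ 2 * m ≤ t ^ 2 / Φ := by
  rcases (hm.trans hmΦ).eq_or_lt with hΦ | hΦ
  · simp [← hΦ]
  · calc (t / Φ) ^ 2 * m ≤ (t / Φ) ^ 2 * Φ := by gcongr
      _ = t ^ 2 / Φ := by field_simp

section RadialField

variable {E : Type*} [NormedAddCommGroup E] [NormedSpace ℝ E]

theorem norm_sq_radialField_mul_le (x : E) (C a : ℝ) {Φ m : ℝ} (hm : 0 ≤ m) (hmΦ : m ≤ Φ) :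
    ‖(-C * (‖x‖ ^ a / Φ) / ‖x‖) • x‖ ^ 2 * m ≤ C ^ 2 * (‖x‖ ^ (2 * a) / Φ) := by
  rcases eq_or_ne x 0 with rfl | hx
  · calc _ = 0 := by simp
      _ ≤ _ := mul_nonneg (sq_nonneg C) (div_nonneg (by positivity) (hm.trans hmΦ))
  have hnorm : ‖(-C * (‖x‖ ^ a / Φ) / ‖x‖) • x‖ = |C| * |‖x‖ ^ a / Φ| := by
    rw [norm_smul, Real.norm_eq_abs, abs_div, abs_norm, div_mul_cancel₀ _ (norm_ne_zero_iff.2 hx),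
      abs_mul, abs_neg]
  rw [hnorm, mul_pow, sq_abs, sq_abs, mul_assoc, mul_comm 2 a,
    Real.rpow_mul (norm_nonneg x), Real.rpow_two]
  exact mul_le_mul_of_nonneg_left (sq_div_mul_le_sq_div hm hmΦ) (sq_nonneg C)

theorem norm_sq_annulusRadialField_mul_le (x : E) (ρ R C a : ℝ) {Φ : ℝ → ℝ} {m : ℝ}
    (hm : ρ ≤ ‖x‖ → 0 ≤ m ∧ m ≤ Φ ‖x‖) :
    ‖if ρ < ‖x‖ ∧ ‖x‖ < R then (-C * (‖x‖ ^ a / Φ ‖x‖) / ‖x‖) • x else 0‖ ^ 2 * m ≤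
      C ^ 2 * {y : E | ρ ≤ ‖y‖ ∧ ‖y‖ ≤ R}.indicator (fun y => ‖y‖ ^ (2 * a) / Φ ‖y‖) x := by
  split_ifs with hx
  · obtain ⟨hm, hmΦ⟩ := hm hx.1.le
    rw [indicator_of_mem (show x ∈ {y : E | ρ ≤ ‖y‖ ∧ ‖y‖ ≤ R} from ⟨hx.1.le, hx.2.le⟩)]
    exact norm_sq_radialField_mul_le x C a hm hmΦ
  · rw [norm_zero, zero_pow two_ne_zero, zero_mul]
    refine mul_nonneg (sq_nonneg C) (indicator_apply_nonneg fun hxS => ?_)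
    obtain ⟨hm, hmΦ⟩ := hm hxS.1
    exact div_nonneg (by positivity) (hm.trans hmΦ)

end RadialField

theorem stmt12_general
    (d : ℕ)
    (ρ : ℝ)
    (K : Set (EuclideanSpace ℝ (Fin d)))
    (hKρ : K ⊆ Metric.ball (0 : EuclideanSpace ℝ (Fin d)) ρ)
    (A : EuclideanSpace ℝ (Fin d) → Matrix (Fin d) (Fin d) ℝ)
    (hAm : ∀ i j, Measurable (fun x => A x i j))
    (φ : EuclideanSpace ℝ (Fin d) → ℝ) (hφloc : LocallyIntegrable φ volume)
    (hφpos : ∀ᵐ x ∂volume, 0 < φ x)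
    (Φ : ℝ → ℝ) (hΦm : Measurable Φ)
    (hbound : ∀ x ∉ K, Real.sqrt (∑ i, ∑ j, (A x i j) ^ 2) * φ x ≤ Φ ‖x‖)
    (an : ℕ → ℝ)
    (han : ∀ n : ℕ, an n =
      ∫ y in {y : EuclideanSpace ℝ (Fin d) | ρ ≤ ‖y‖ ∧ ‖y‖ ≤ (n:ℝ)},
        ‖y‖ ^ (2 - 2 * (d:ℝ)) / Φ ‖y‖)
    (hanpos : ∀ n : ℕ, ρ < n → 0 < an n)
    (V : ℝ)
    (du : ℕ → EuclideanSpace ℝ (Fin d) → EuclideanSpace ℝ (Fin d))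
    (hdu : ∀ n : ℕ, ∀ x : EuclideanSpace ℝ (Fin d), du n x =
      if ρ < ‖x‖ ∧ ‖x‖ < (n:ℝ) then
        (-((d:ℝ) * V / an n) * (‖x‖ ^ (1 - (d:ℝ)) / Φ ‖x‖) / ‖x‖) • x
      else 0) :
    ∀ n : ℕ, ρ < n →
      ∑ i, ∑ j, ∫ x : EuclideanSpace ℝ (Fin d),
          A x i j * du n x i * du n x j * φ x ≤ (d:ℝ) ^ 2 * V ^ 2 / an n := by
  intro n hn
  set C := (d:ℝ) * V / an n
  set S := {y : EuclideanSpace ℝ (Fin d) | ρ ≤ ‖y‖ ∧ ‖y‖ ≤ (n:ℝ)}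
  set h := fun y : EuclideanSpace ℝ (Fin d) => ‖y‖ ^ (2 * (1 - (d:ℝ))) / Φ ‖y‖
  have hS : MeasurableSet S := measurable_norm measurableSet_Icc
  have han_eq : an n = ∫ y in S, h y := by
    simp only [han n, h, S, mul_sub, mul_one]
  have hh : IntegrableOn h S := by
    by_contra hh
    exact (hanpos n hn).ne' (by rw [han_eq, integral_undef hh])
  have hdum : Measurable (du n) := by
    rw [funext (hdu n)]
    refine Measurable.ite ?_ (by fun_prop) measurable_const
    exact (measurableSet_lt measurable_const measurable_norm).inter
      (measurableSet_lt measurable_norm measurable_const)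
  have hle : ∀ x, 0 ≤ φ x →
      ‖du n x‖ ^ 2 * (√(∑ i, ∑ j, A x i j ^ 2) * φ x) ≤ C ^ 2 * S.indicator h x := by
    intro x hφx
    rw [hdu n x]
    refine norm_sq_annulusRadialField_mul_le x ρ n C (1 - d) fun hx =>
      ⟨by positivity, hbound x fun hxK => ?_⟩
    simpa using (mem_ball_zero_iff.1 (hKρ hxK)).trans_le hx
  calc ∑ i, ∑ j, ∫ x, A x i j * du n x i * du n x j * φ x
      ≤ ∫ x, C ^ 2 * S.indicator h x :=
        sum_sum_integral_mul_le_integral_of_ae_le (fun i j => (hAm i j).aestronglyMeasurable)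
          hdum.aestronglyMeasurable hφloc.aestronglyMeasurable
          (((integrable_indicator_iff hS).2 hh).const_mul _)
          (hφpos.mono fun x hx => hx.le) (hφpos.mono fun x hx => hle x hx.le)
    _ = (d:ℝ) ^ 2 * V ^ 2 / an n := by
        rw [integral_const_mul, integral_indicator hS, ← han_eq]
        simp only [C, div_pow]
        field_simp [(hanpos n hn).ne']

theorem stmt12
    (d : ℕ) (hd : 2 ≤ d)
    (ρ : ℝ) (hρ : 0 < ρ)
    (K : Set (EuclideanSpace ℝ (Fin d))) (hK : IsCompact K)
    (hKρ : K ⊆ Metric.ball (0 : EuclideanSpace ℝ (Fin d)) ρ)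
    (A : EuclideanSpace ℝ (Fin d) → Matrix (Fin d) (Fin d) ℝ)
    (hAsymm : ∀ x, (A x).IsSymm)
    (hAm : ∀ i j, Measurable (fun x => A x i j))
    (φ : EuclideanSpace ℝ (Fin d) → ℝ) (hφloc : LocallyIntegrable φ volume)
    (hφpos : ∀ᵐ x ∂volume, 0 < φ x)
    (Φ : ℝ → ℝ) (hΦm : Measurable Φ)
    (hbound : ∀ x ∉ K, Real.sqrt (∑ i, ∑ j, (A x i j) ^ 2) * φ x ≤ Φ ‖x‖)
    (hΦloc : LocallyIntegrableOn (fun s => s ^ (1 - (d:ℝ)) / Φ s) (Set.Ioi ρ) volume)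
    (an : ℕ → ℝ)
    (han : ∀ n : ℕ, an n =
      ∫ y in {y : EuclideanSpace ℝ (Fin d) | ρ ≤ ‖y‖ ∧ ‖y‖ ≤ (n:ℝ)},
        ‖y‖ ^ (2 - 2 * (d:ℝ)) / Φ ‖y‖)
    (hanpos : ∀ n : ℕ, ρ < n → 0 < an n)
    (V : ℝ) (hV : V = (volume (Metric.ball (0 : EuclideanSpace ℝ (Fin d)) 1)).toReal)
    (u : ℕ → EuclideanSpace ℝ (Fin d) → ℝ)
    (hu : ∀ n : ℕ, ∀ x : EuclideanSpace ℝ (Fin d), u n x =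
      if ‖x‖ ≤ ρ then 1
      else if ‖x‖ ≤ (n:ℝ) then
        1 - ((d:ℝ) * V / an n) * ∫ s in ρ..‖x‖, s ^ (1 - (d:ℝ)) / Φ s
      else 0)
    (du : ℕ → EuclideanSpace ℝ (Fin d) → EuclideanSpace ℝ (Fin d))
    (hdu : ∀ n : ℕ, ∀ x : EuclideanSpace ℝ (Fin d), du n x =
      if ρ < ‖x‖ ∧ ‖x‖ < (n:ℝ) then
        (-((d:ℝ) * V / an n) * (‖x‖ ^ (1 - (d:ℝ)) / Φ ‖x‖) / ‖x‖) • x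
      else 0) :
    ∀ n : ℕ, ρ < n →
      ∑ i, ∑ j, ∫ x : EuclideanSpace ℝ (Fin d),
          A x i j * du n x i * du n x j * φ x ≤ (d:ℝ) ^ 2 * V ^ 2 / an n :=
  stmt12_general d ρ K hKρ A hAm φ hφloc hφpos Φ hΦm hbound an han hanpos V du hdu
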